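/- arXiv:1507.03525 — 5 statements merged into one kernel-verified Lean document; each statement's English description precedes it below -/
import Mathlib

section
/- Let V₁, …, Vₙ be non-negative independent random variables such that P(Vᵢ > 1) ≥ q for all i, for some q ∈ (0, 1/2). Then there exist absolute constants c, c' > 0 such that P(∑ⱼ Vⱼ ≤ c·q·n / log(1/q)) ≤ exp(−c'·q·n). -/
/-!
Chernoff's bound at the negative parameter `t = log q`. Since `Vᵢ ≥ 0`, the variable `exp (t Vᵢ)` is
at most `1`, and at most `exp t = q` on the event `{1 < Vᵢ}` of probability at least `q`; hence
`E exp (t Vᵢ) ≤ 1 - (1 - q) q ≤ exp (-(1 - q) q)`, and by independence `E exp (t ∑ Vⱼ)` is at most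
`exp (-(1 - q) q n)`. The Chernoff factor `exp (-t ε)` at the threshold `ε = q n / (4 log (1/q))`
is only `exp (q n / 4)`, and `1 - q ≥ 1/2`, so `c = c' = 1/4` work.
-/

open MeasureTheory ProbabilityTheory Real

lemma exp_mul_le_one_sub_mul_indicator {x t : ℝ} (hx : 0 ≤ x) (ht : t ≤ 0) (a : ℝ) :
    exp (t * x) ≤ 1 - (1 - exp (t * a)) * {y | a < y}.indicator (1 : ℝ → ℝ) x := by
  by_cases hax : a < x
  · have : t * x ≤ t * a := mul_le_mul_of_nonpos_left hax.le ht
    simpa [Set.indicator_of_mem (show x ∈ {y | a < y} from hax)] using this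
  · simpa [Set.indicator_of_notMem (show x ∉ {y | a < y} from hax)]
      using mul_nonpos_of_nonpos_of_nonneg ht hx

namespace ProbabilityTheory

variable {Ω : Type*} [MeasurableSpace Ω] {μ : Measure Ω} {t : ℝ}

lemma integrable_exp_mul_of_nonneg_of_nonpos [IsFiniteMeasure μ] {X : Ω → ℝ} (hX : Measurable X)
    (hX0 : ∀ ω, 0 ≤ X ω) (ht : t ≤ 0) : Integrable (fun ω ↦ exp (t * X ω)) μ :=
  .of_mem_Icc 0 1 (hX.const_mul t).exp.aemeasurable <| ae_of_all _ fun ω ↦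
    ⟨(exp_pos _).le, exp_le_one_iff.mpr (mul_nonpos_of_nonpos_of_nonneg ht (hX0 ω))⟩

lemma mgf_le_one_sub_mul_measureReal_lt [IsProbabilityMeasure μ] {X : Ω → ℝ} (hX : Measurable X)
    (hX0 : ∀ ω, 0 ≤ X ω) (ht : t ≤ 0) (a : ℝ) :
    mgf X μ t ≤ 1 - (1 - exp (t * a)) * μ.real {ω | a < X ω} := by
  have hA : MeasurableSet {y : ℝ | a < y} := measurableSet_Ioi
  have hind : Integrable (fun ω ↦ {y | a < y}.indicator (1 : ℝ → ℝ) (X ω)) μ :=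
    (integrable_const 1).indicator (hX hA)
  calc mgf X μ t
      ≤ ∫ ω, (1 - (1 - exp (t * a)) * {y | a < y}.indicator (1 : ℝ → ℝ) (X ω)) ∂μ :=
        integral_mono (integrable_exp_mul_of_nonneg_of_nonpos hX hX0 ht)
          ((integrable_const 1).sub (hind.const_mul _))
          fun ω ↦ exp_mul_le_one_sub_mul_indicator (hX0 ω) ht a
    _ = 1 - (1 - exp (t * a)) * μ.real {ω | a < X ω} := by
        have hP : ∫ ω, {y | a < y}.indicator (1 : ℝ → ℝ) (X ω) ∂μ = μ.real {ω | a < X ω} :=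
          integral_indicator_one (hX hA)
        rw [integral_sub (integrable_const 1) (hind.const_mul _), integral_const_mul, hP]
        simp

lemma iIndepFun.mgf_sum_le_exp {ι : Type*} [Fintype ι] {V : ι → Ω → ℝ} (hindep : iIndepFun V μ)
    (hV : ∀ i, Measurable (V i)) (hV0 : ∀ i ω, 0 ≤ V i ω) (ht : t ≤ 0) {a p : ℝ} (ha : 0 ≤ a)
    (hp : ∀ i, p ≤ μ.real {ω | a < V i ω}) :
    mgf (fun ω ↦ ∑ i, V i ω) μ t ≤ exp (-(1 - exp (t * a)) * p * Fintype.card ι) := by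
  have := hindep.isProbabilityMeasure
  have hgap : 0 ≤ 1 - exp (t * a) :=
    sub_nonneg.mpr (exp_le_one_iff.mpr (mul_nonpos_of_nonpos_of_nonneg ht ha))
  have hmgf (i : ι) : mgf (V i) μ t ≤ exp (-(1 - exp (t * a)) * p) := by
    calc mgf (V i) μ t ≤ 1 - (1 - exp (t * a)) * μ.real {ω | a < V i ω} :=
          mgf_le_one_sub_mul_measureReal_lt (hV i) (hV0 i) ht a
      _ ≤ 1 - (1 - exp (t * a)) * p := by gcongr; exact hp i
      _ ≤ exp (-(1 - exp (t * a)) * p) := by linarith [add_one_le_exp (-(1 - exp (t * a)) * p)]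
  calc mgf (fun ω ↦ ∑ i, V i ω) μ t = ∏ i, mgf (V i) μ t := by
        simpa only [Finset.sum_fn] using hindep.mgf_sum (t := t) hV Finset.univ
    _ ≤ ∏ _i : ι, exp (-(1 - exp (t * a)) * p) :=
        Finset.prod_le_prod (fun i _ ↦ mgf_nonneg) fun i _ ↦ hmgf i
    _ = exp (-(1 - exp (t * a)) * p * Fintype.card ι) := by
        rw [Finset.prod_const, Finset.card_univ, ← exp_nat_mul]; ring_nf

lemma iIndepFun.measureReal_sum_le_le_exp {ι : Type*} [Fintype ι] {V : ι → Ω → ℝ}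
    (hindep : iIndepFun V μ) (hV : ∀ i, Measurable (V i)) (hV0 : ∀ i ω, 0 ≤ V i ω) (ht : t ≤ 0)
    {a p : ℝ} (ha : 0 ≤ a) (hp : ∀ i, p ≤ μ.real {ω | a < V i ω}) (ε : ℝ) :
    μ.real {ω | ∑ i, V i ω ≤ ε} ≤ exp (-t * ε - (1 - exp (t * a)) * p * Fintype.card ι) := by
  have := hindep.isProbabilityMeasure
  have hint := integrable_exp_mul_of_nonneg_of_nonpos (μ := μ)
    (Finset.measurable_sum Finset.univ fun i _ ↦ hV i)
    (fun ω ↦ Finset.sum_nonneg fun i _ ↦ hV0 i ω) ht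
  calc μ.real {ω | ∑ i, V i ω ≤ ε} ≤ exp (-t * ε) * mgf (fun ω ↦ ∑ i, V i ω) μ t :=
        measure_le_le_exp_mul_mgf ε ht hint
    _ ≤ exp (-t * ε) * exp (-(1 - exp (t * a)) * p * Fintype.card ι) := by
        gcongr; exact hindep.mgf_sum_le_exp hV hV0 ht ha hp
    _ = _ := by rw [← exp_add]; ring_nf

end ProbabilityTheory

/-- Tensorization lemma: if `V₁, …, Vₙ` are non-negative independent random variables with
`P(Vᵢ > 1) ≥ q` for all `i`, where `q ∈ (0, 1/2)`, then there are absolute constants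
`c, c' > 0` with `P(∑ⱼ Vⱼ ≤ c·q·n / log(1/q)) ≤ exp(−c'·q·n)`. -/
theorem stmt0 :
    ∃ c c' : ℝ, 0 < c ∧ 0 < c' ∧
      ∀ (Ω : Type) [MeasureSpace Ω] [IsProbabilityMeasure (ℙ : Measure Ω)]
        (n : ℕ) (q : ℝ), q ∈ Set.Ioo (0 : ℝ) (1/2) →
        ∀ (V : Fin n → Ω → ℝ), (∀ i, Measurable (V i)) →
          (∀ i ω, 0 ≤ V i ω) →
          ProbabilityTheory.iIndepFun V ℙ →
          (∀ i, q ≤ (ℙ {ω | 1 < V i ω}).toReal) →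
          (ℙ {ω | ∑ j, V j ω ≤ c * q * n / Real.log (1/q)}).toReal ≤
            Real.exp (-c' * q * n) := by
  refine ⟨1/4, 1/4, by norm_num, by norm_num, ?_⟩
  intro Ω _ _ n q ⟨hq0, hq2⟩ V hV hV0 hindep hp
  have hlog : log q < 0 := log_neg hq0 (by linarith)
  have hbound := hindep.measureReal_sum_le_le_exp hV hV0 hlog.le zero_le_one hp
    (1/4 * q * n / log (1/q))
  rw [mul_one, exp_log hq0, Fintype.card_fin] at hbound
  have hchernoff : -log q * (1/4 * q * n / log (1/q)) = 1/4 * q * n := by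
    rw [one_div q, log_inv]; field_simp [hlog.ne]
  refine hbound.trans (exp_le_exp.mpr ?_)
  rw [hchernoff]
  linarith [mul_nonneg (mul_nonneg (sub_nonneg.mpr hq2.le) hq0.le) (Nat.cast_nonneg (α := ℝ) n)]
end

section
/- Let x ∈ ℝⁿ with ‖x‖₂ = 1, let p ∈ (0,1) and δ₀ ∈ (0,1), and define the least common denominator D(x) := inf { θ > 0 : dist(θx, ℤⁿ) < (δ₀ p)^{-1/2} · sqrt(max(0, log(sqrt(δ₀ p) · θ))) }. Then D(x) ≥ 1 / (2‖x‖_∞). -/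
/-!
If `θ ‖x‖_∞ < 1/2`, then `0` is the nearest integer to every coordinate of `θ x`, so
`dist(θ x, ℤⁿ) = θ ‖x‖ = θ`; but the tolerance `L √(log₊ (θ / L))` never exceeds `θ`, because
`log₊ t ≤ t²`. So no `θ < 1 / (2 ‖x‖_∞)` is admissible. The admissible set is nonempty since
the tolerance is unbounded in `θ` while rounding gives `dist(θ x, ℤⁿ) ≤ √n`.
-/

open Real WithLp

lemma Real.sqrt_posLog_le_self {t : ℝ} (ht : 0 ≤ t) : √(log⁺ t) ≤ t := by
  refine sqrt_le_iff.mpr ⟨ht, max_le (sq_nonneg t) ?_⟩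
  rcases ht.eq_or_lt with rfl | ht
  · simp
  · nlinarith [log_le_sub_one_of_pos ht]

lemma mul_sqrt_posLog_div_le {L θ : ℝ} (hL : 0 < L) (hθ : 0 ≤ θ) :
    L * √(log⁺ (θ / L)) ≤ θ :=
  calc L * √(log⁺ (θ / L)) ≤ L * (θ / L) := by
        gcongr; exact sqrt_posLog_le_self (div_nonneg hθ hL.le)
    _ = θ := mul_div_cancel₀ θ hL.ne'

lemma exists_lt_mul_sqrt_posLog_div {L : ℝ} (hL : 0 < L) (B : ℝ) :
    ∃ θ > 0, B < L * √(log⁺ (θ / L)) := by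
  refine ⟨L * exp ((B / L) ^ 2 + 1), by positivity, ?_⟩
  have hlog : log⁺ (L * exp ((B / L) ^ 2 + 1) / L) = (B / L) ^ 2 + 1 := by
    rw [mul_div_cancel_left₀ _ hL.ne', posLog, log_exp]
    exact max_eq_right (by positivity)
  have : B / L < √((B / L) ^ 2 + 1) :=
    (le_abs_self _).trans_lt (lt_sqrt_of_sq_lt (by rw [sq_abs]; linarith))
  rw [hlog]
  rwa [div_lt_iff₀' hL] at this

variable {ι : Type*} [Fintype ι]

lemma EuclideanSpace.norm_sub_round_le (v : EuclideanSpace ℝ ι) :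
    ‖v - toLp 2 (fun i => ((round (v i) : ℤ) : ℝ))‖ ≤ √(Fintype.card ι) := by
  rw [EuclideanSpace.norm_eq]
  gcongr
  calc ∑ i, ‖(v - toLp 2 (fun i => ((round (v i) : ℤ) : ℝ))) i‖ ^ 2
      ≤ ∑ _i : ι, (1 : ℝ) := by
        gcongr with i
        have := abs_sub_round (v i)
        simp only [PiLp.sub_apply, norm_eq_abs]
        nlinarith [abs_nonneg (v i - round (v i))]
    _ = Fintype.card ι := by simp

lemma EuclideanSpace.norm_le_norm_sub_intCast {v : EuclideanSpace ℝ ι}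
    (hv : ∀ i, |v i| < 1 / 2) (z : ι → ℤ) :
    ‖v‖ ≤ ‖v - toLp 2 (fun i => (z i : ℝ))‖ := by
  simp only [EuclideanSpace.norm_eq, PiLp.sub_apply, norm_eq_abs]
  refine sqrt_le_sqrt (Finset.sum_le_sum fun i _ => pow_le_pow_left₀ (abs_nonneg _) ?_ 2)
  have hround : round (v i) = 0 :=
    round_eq_zero_iff.mpr ⟨by linarith [neg_abs_le (v i), hv i], (le_abs_self _).trans_lt (hv i)⟩
  simpa [hround] using round_le (v i) (z i)

/-- With `L = (δ₀ p)^{-1/2}` this is the `D(x)` of the statement. -/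
noncomputable def leastCommonDenominator (L : ℝ) (x : EuclideanSpace ℝ ι) : ℝ :=
  sInf {θ : ℝ | 0 < θ ∧ ∃ z : ι → ℤ,
    ‖θ • x - toLp 2 (fun i => (z i : ℝ))‖ < L * √(log⁺ (θ / L))}

theorem one_div_two_mul_iSup_abs_le_leastCommonDenominator {x : EuclideanSpace ℝ ι}
    (hx : ‖x‖ = 1) {L : ℝ} (hL : 0 < L) :
    1 / (2 * ⨆ i, |x i|) ≤ leastCommonDenominator L x := by
  refine le_csInf ?nonempty ?lower
  case nonempty =>
    obtain ⟨θ, hθ, hlt⟩ := exists_lt_mul_sqrt_posLog_div hL √(Fintype.card ι)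
    exact ⟨θ, hθ, _, ((θ • x).norm_sub_round_le).trans_lt hlt⟩
  case lower =>
    rintro θ ⟨hθ, z, hz⟩
    set M := ⨆ i, |x i|
    have hscaled : 1 ≤ 2 * M * θ := by
      by_contra! h
      have hsmall : ∀ i, |(θ • x) i| < 1 / 2 := fun i =>
        calc |(θ • x) i| = θ * |x i| := by simp [abs_mul, abs_of_pos hθ]
          _ ≤ θ * M := by gcongr; exact le_ciSup (Set.finite_range fun i => |x i|).bddAbove i
          _ < 1 / 2 := by linarith
      have := ((θ • x).norm_le_norm_sub_intCast hsmall z).trans_lt hz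
      rw [norm_smul, hx, mul_one, norm_of_nonneg hθ.le] at this
      exact this.not_ge (mul_sqrt_posLog_div_le hL hθ.le)
    have hM : 0 < M := by nlinarith
    rw [div_le_iff₀ (by positivity)]
    linarith

theorem stmt1_general (n : ℕ) (x : EuclideanSpace ℝ (Fin n)) (hx : ‖x‖ = 1)
    (p δ₀ : ℝ) (hp : p ∈ Set.Ioo (0:ℝ) 1) (hδ₀ : δ₀ ∈ Set.Ioo (0:ℝ) 1) :
    1 / (2 * ⨆ i, |x i|) ≤
      sInf {θ : ℝ | 0 < θ ∧ ∃ z : Fin n → ℤ,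
        ‖θ • x - (WithLp.equiv 2 (Fin n → ℝ)).symm (fun i => (z i : ℝ))‖ <
          (δ₀ * p) ^ (-(1/2 : ℝ)) *
            Real.sqrt (max 0 (Real.log (Real.sqrt (δ₀ * p) * θ)))} := by
  have hq : 0 < δ₀ * p := mul_pos hδ₀.1 hp.1
  have hscale (θ : ℝ) : √(δ₀ * p) * θ = θ / (δ₀ * p) ^ (-(1/2 : ℝ)) := by
    rw [rpow_neg hq.le, div_inv_eq_mul, sqrt_eq_rpow, mul_comm]
  simp_rw [hscale]
  exact one_div_two_mul_iSup_abs_le_leastCommonDenominator hx (rpow_pos_of_pos hq _)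

/-- Lower bound for the least common denominator: for a unit vector `x ∈ ℝⁿ`, with
`D(x) = inf {θ > 0 : dist(θx, ℤⁿ) < (δ₀p)^{-1/2} √(log₊(√(δ₀p) θ))}`, one has
`D(x) ≥ 1/(2‖x‖_∞)`. -/
theorem stmt1 (n : ℕ) (hn : 0 < n) (x : EuclideanSpace ℝ (Fin n)) (hx : ‖x‖ = 1)
    (p δ₀ : ℝ) (hp : p ∈ Set.Ioo (0:ℝ) 1) (hδ₀ : δ₀ ∈ Set.Ioo (0:ℝ) 1) :
    1 / (2 * ⨆ i, |x i|) ≤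
      sInf {θ : ℝ | 0 < θ ∧ ∃ z : Fin n → ℤ,
        ‖θ • x - (WithLp.equiv 2 (Fin n → ℝ)).symm (fun i => (z i : ℝ))‖ <
          (δ₀ * p) ^ (-(1/2 : ℝ)) *
            Real.sqrt (max 0 (Real.log (Real.sqrt (δ₀ * p) * θ)))} :=
  stmt1_general n x hx p δ₀ hp hδ₀
end

section
/- Let A be an n × n real matrix with columns A₁, …, Aₙ, and for each j let Hⱼ be the span of the columns {Aᵢ : i ≠ j}. Then for any ε, ρ > 0 and any positive integer M < n, P( inf_{x ∈ Incomp(M, ρ)} ‖A x‖₂ ≤ ε ρ² √(p/n) ) ≤ (1/M) ∑_{j=1}^n P( dist(Aⱼ, Hⱼ) ≤ ρ √p ε ). -/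
/-!
If `‖A x‖` is small for a unit vector `x` at distance more than `ρ` from every `M`-sparse vector,
then more than `M` coordinates satisfy `|x j| > ρ / √n` (truncating `x` to them would otherwise give
such a sparse vector), and for each of them `A_j = (x j)⁻¹ (A x - ∑_{i ≠ j} x i • A_i)` puts `A_j`
within `‖A x‖ / |x j| ≤ ε ρ √p` of `H_j`. Hence the event on the left forces at least `M` of the
events on the right, and Markov's inequality for their number gives the bound.
-/

open MeasureTheory ProbabilityTheory Finset
open scoped ENNReal

theorem mul_measure_le_sum_measure_of_exists_finset {Ω ι : Type*} [MeasurableSpace Ω] [Fintype ι]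
    (μ : Measure Ω) (E : ι → Set Ω) (s : Set Ω) (M : ℕ)
    (hs : ∀ ω ∈ s, ∃ S : Finset ι, M ≤ #S ∧ ∀ j ∈ S, ω ∈ E j) :
    M * μ s ≤ ∑ j, μ (E j) := by
  set F := fun j => toMeasurable μ (E j)
  have hF : ∀ j, MeasurableSet (F j) := fun j => measurableSet_toMeasurable _ _
  set count : Ω → ℝ≥0∞ := fun ω => ∑ j, (F j).indicator 1 ω
  have hs_sub : s ⊆ {ω | (M : ℝ≥0∞) ≤ count ω} := fun ω hω => by
    obtain ⟨S, hMS, hSE⟩ := hs ω hω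
    calc (M : ℝ≥0∞) ≤ ∑ j ∈ S, (F j).indicator 1 ω := by
          rw [sum_congr rfl fun j hj => Set.indicator_of_mem (subset_toMeasurable μ _ (hSE j hj)) _]
          simpa using hMS
      _ ≤ count ω := sum_le_sum_of_subset S.subset_univ
  calc M * μ s ≤ M * μ {ω | (M : ℝ≥0∞) ≤ count ω} := by gcongr
    _ ≤ ∫⁻ ω, count ω ∂μ :=
      mul_meas_ge_le_lintegral₀ (by fun_prop (disch := exact hF _)) _
    _ = ∑ j, μ (F j) := by
      rw [lintegral_finsetSum _ fun j _ => measurable_one.indicator (hF j)]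
      simp only [lintegral_indicator_one (hF _)]
    _ = ∑ j, μ (E j) := by simp only [F, measure_toMeasurable]

theorem EuclideanSpace.lt_card_spread_coords_of_incompressible {ι : Type*} [Fintype ι]
    (x : EuclideanSpace ℝ ι) {M : ℕ} {ρ : ℝ} (hρ : 0 ≤ ρ)
    (hx : ¬ ∃ y : EuclideanSpace ℝ ι, {i | y i ≠ 0}.ncard ≤ M ∧ ‖x - y‖ ≤ ρ) :
    M < #{i | ρ / √(Fintype.card ι) < |x i|} := by
  classical
  set S : Finset ι := {i | ρ / √(Fintype.card ι) < |x i|}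
  by_contra! hS
  refine hx ⟨WithLp.toLp 2 fun i => if i ∈ S then x i else 0, ?_, ?_⟩
  · refine le_trans (Set.ncard_le_ncard ?_ S.finite_toSet) ((Set.ncard_coe_finset S).trans_le hS)
    intro i hi
    by_contra hiS
    simp_all
  · have hcoord : ∀ i, (x i - if i ∈ S then x i else 0) ^ 2 ≤ (ρ / √(Fintype.card ι)) ^ 2 := by
      intro i
      by_cases hi : i ∈ S
      · simpa [hi] using sq_nonneg _
      · simp only [hi, if_false, sub_zero, ← sq_abs (x i)]
        exact pow_le_pow_left₀ (abs_nonneg _) (by simpa [S] using hi) 2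
    have hdist_sq : ‖x - WithLp.toLp 2 fun i => if i ∈ S then x i else 0‖ ^ 2 ≤ ρ ^ 2 := calc
      _ = ∑ i, (x i - if i ∈ S then x i else 0) ^ 2 := by
        simp [EuclideanSpace.norm_sq_eq]
      _ ≤ Fintype.card ι * (ρ / √(Fintype.card ι)) ^ 2 := by
        simpa using sum_le_sum fun i (_ : i ∈ univ) => hcoord i
      _ ≤ ρ ^ 2 := by
        rw [div_pow, Real.sq_sqrt (Nat.cast_nonneg _)]
        rcases (Nat.cast_nonneg (α := ℝ) (Fintype.card ι)).eq_or_lt with hcard | hcard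
        · simp [← hcard]; positivity
        · rw [mul_div_cancel₀ _ hcard.ne']
    exact pow_le_pow_iff_left₀ (norm_nonneg _) hρ two_ne_zero |>.mp hdist_sq

theorem Matrix.infDist_col_span_other_cols_le {ι : Type*} [Fintype ι] [DecidableEq ι]
    (B : Matrix ι ι ℝ) (x : EuclideanSpace ℝ ι) {j : ι} (hxj : x j ≠ 0) :
    Metric.infDist (WithLp.toLp 2 fun i => B i j)
      (Submodule.span ℝ {v : EuclideanSpace ℝ ι | ∃ i, i ≠ j ∧ v = WithLp.toLp 2 fun k => B k i} :
        Set (EuclideanSpace ℝ ι)) ≤ ‖WithLp.toLp 2 (B.mulVec x)‖ / |x j| := by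
  set col : ι → EuclideanSpace ℝ ι := fun k => WithLp.toLp 2 fun i => B i k
  set v := (-(x j)⁻¹) • ∑ k ∈ univ.erase j, x k • col k
  have hv : v ∈ Submodule.span ℝ {v : EuclideanSpace ℝ ι | ∃ i, i ≠ j ∧ v = col i} :=
    Submodule.smul_mem _ _ <| Submodule.sum_mem _ fun k hk =>
      Submodule.smul_mem _ _ <| Submodule.subset_span ⟨k, ne_of_mem_erase hk, rfl⟩
  have hBx : WithLp.toLp 2 (B.mulVec x) = ∑ k, x k • col k := by
    ext i
    simp [col, Matrix.mulVec, dotProduct, mul_comm]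
  have hcol : col j - v = (x j)⁻¹ • WithLp.toLp 2 (B.mulVec x) := by
    simp only [v]
    rw [neg_smul, sub_neg_eq_add, hBx, ← add_sum_erase _ _ (mem_univ j), smul_add, smul_smul,
      inv_mul_cancel₀ hxj, one_smul]
  calc _ ≤ dist (col j) v := Metric.infDist_le_dist_of_mem hv
    _ = _ := by
      rw [dist_eq_norm, hcol, norm_smul, norm_inv, Real.norm_eq_abs, inv_mul_eq_div]

theorem Matrix.exists_finset_infDist_col_span_other_cols_le {ι : Type*} [Fintype ι] [DecidableEq ι]
    (B : Matrix ι ι ℝ) (x : EuclideanSpace ℝ ι) {M : ℕ} {ρ : ℝ} (hρ : 0 < ρ)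
    (hx : ¬ ∃ y : EuclideanSpace ℝ ι, {i | y i ≠ 0}.ncard ≤ M ∧ ‖x - y‖ ≤ ρ) :
    ∃ S : Finset ι, M < #S ∧ ∀ j ∈ S,
      Metric.infDist (WithLp.toLp 2 fun i => B i j)
        (Submodule.span ℝ {v : EuclideanSpace ℝ ι | ∃ i, i ≠ j ∧ v = WithLp.toLp 2 fun k => B k i} :
          Set (EuclideanSpace ℝ ι)) ≤ √(Fintype.card ι) / ρ * ‖WithLp.toLp 2 (B.mulVec x)‖ := by
  refine ⟨_, x.lt_card_spread_coords_of_incompressible hρ.le hx, fun j hj => ?_⟩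
  have hxj : ρ / √(Fintype.card ι) < |x j| := (mem_filter.mp hj).2
  have hδ : 0 < ρ / √(Fintype.card ι) :=
    div_pos hρ (Real.sqrt_pos.mpr (Nat.cast_pos.mpr (Fintype.card_pos_iff.mpr ⟨j⟩)))
  calc _ ≤ ‖WithLp.toLp 2 (B.mulVec x)‖ / |x j| :=
        B.infDist_col_span_other_cols_le x (abs_pos.mp (hδ.trans hxj))
    _ ≤ ‖WithLp.toLp 2 (B.mulVec x)‖ / (ρ / √(Fintype.card ι)) := by gcongr
    _ = _ := by rw [div_div_eq_mul_div, mul_div_assoc, mul_comm]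

theorem measureReal_le_one_div_mul_sum_of_exists_finset {Ω ι : Type*} [MeasurableSpace Ω] [Fintype ι]
    (μ : Measure Ω) [IsFiniteMeasure μ] (E : ι → Set Ω) (s : Set Ω) {M : ℕ} (hM : 0 < M)
    (hs : ∀ ω ∈ s, ∃ S : Finset ι, M ≤ #S ∧ ∀ j ∈ S, ω ∈ E j) :
    μ.real s ≤ 1 / M * ∑ j, μ.real (E j) := by
  rw [one_div, inv_mul_eq_div, le_div_iff₀' (Nat.cast_pos.mpr hM)]
  have := ENNReal.toReal_mono (ENNReal.sum_ne_top.mpr fun j _ => measure_ne_top μ (E j))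
    (mul_measure_le_sum_measure_of_exists_finset μ E s M hs)
  rwa [ENNReal.toReal_mul, ENNReal.toReal_natCast,
    ENNReal.toReal_sum fun j _ => measure_ne_top μ (E j)] at this

theorem stmt4_general (n M : ℕ) (hM : 0 < M) (hMn : M < n)
    (Ω : Type) [MeasureSpace Ω] [IsProbabilityMeasure (ℙ : Measure Ω)]
    (A : Ω → Matrix (Fin n) (Fin n) ℝ)
    (p ε ρ : ℝ) (hρ : 0 < ρ) :
    (ℙ {ω | ∃ x : EuclideanSpace ℝ (Fin n), ‖x‖ = 1 ∧
        (¬ ∃ y : EuclideanSpace ℝ (Fin n),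
            {i | y i ≠ 0}.ncard ≤ M ∧ ‖x - y‖ ≤ ρ) ∧
        ‖(WithLp.equiv 2 (Fin n → ℝ)).symm ((A ω).mulVec x)‖ ≤
          ε * ρ^2 * Real.sqrt (p / n)}).toReal ≤
      (1 / M) * ∑ j : Fin n, (ℙ {ω | Metric.infDist
          ((WithLp.equiv 2 (Fin n → ℝ)).symm (fun i => A ω i j))
          (Submodule.span ℝ {v : EuclideanSpace ℝ (Fin n) |
            ∃ i, i ≠ j ∧ v = (WithLp.equiv 2 (Fin n → ℝ)).symm (fun k => A ω k i)} :
              Set (EuclideanSpace ℝ (Fin n))) ≤ ρ * Real.sqrt p * ε}).toReal := by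
  have hn : 0 < √(n : ℝ) := Real.sqrt_pos.mpr (Nat.cast_pos.mpr (hM.trans hMn))
  have hscale : √n / ρ * (ε * ρ ^ 2 * √(p / n)) = ρ * √p * ε := by
    rw [Real.sqrt_div' _ (Nat.cast_nonneg n)]
    field_simp
  refine measureReal_le_one_div_mul_sum_of_exists_finset ℙ _ _ hM fun ω ⟨x, _, hx, hAx⟩ => ?_
  obtain ⟨S, hMS, hS⟩ := (A ω).exists_finset_infDist_col_span_other_cols_le x hρ hx
  refine ⟨S, hMS.le, fun j hj => (hS j hj).trans ?_⟩
  rw [Fintype.card_fin, ← hscale]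
  gcongr
  exact hAx

/-- Invertibility via distance: for a random `n × n` matrix `A` with columns `Aⱼ` and
`Hⱼ = span{Aᵢ : i ≠ j}`, for any `ε, ρ > 0` and `M < n`,
`P(inf over Incomp(M,ρ) of ‖Ax‖₂ ≤ ερ²√(p/n)) ≤ (1/M) ∑ⱼ P(dist(Aⱼ, Hⱼ) ≤ ρ√p ε)`. -/
theorem stmt4 (n M : ℕ) (hM : 0 < M) (hMn : M < n)
    (Ω : Type) [MeasureSpace Ω] [IsProbabilityMeasure (ℙ : Measure Ω)]
    (A : Ω → Matrix (Fin n) (Fin n) ℝ)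
    (hmeas : ∀ i j, Measurable fun ω => A ω i j)
    (p ε ρ : ℝ) (hp : p ∈ Set.Ioc (0:ℝ) 1) (hε : 0 < ε) (hρ : 0 < ρ) :
    (ℙ {ω | ∃ x : EuclideanSpace ℝ (Fin n), ‖x‖ = 1 ∧
        (¬ ∃ y : EuclideanSpace ℝ (Fin n),
            {i | y i ≠ 0}.ncard ≤ M ∧ ‖x - y‖ ≤ ρ) ∧
        ‖(WithLp.equiv 2 (Fin n → ℝ)).symm ((A ω).mulVec x)‖ ≤
          ε * ρ^2 * Real.sqrt (p / n)}).toReal ≤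
      (1 / M) * ∑ j : Fin n, (ℙ {ω | Metric.infDist
          ((WithLp.equiv 2 (Fin n → ℝ)).symm (fun i => A ω i j))
          (Submodule.span ℝ {v : EuclideanSpace ℝ (Fin n) |
            ∃ i, i ≠ j ∧ v = (WithLp.equiv 2 (Fin n → ℝ)).symm (fun k => A ω k i)} :
              Set (EuclideanSpace ℝ (Fin n))) ≤ ρ * Real.sqrt p * ε}).toReal :=
  stmt4_general n M hM hMn Ω A p ε ρ hρ
end

section
/- Let x ∈ S^{n−1} and m < M ≤ n/2 with m ≤ M/2. Then √M · ‖x_{[M+1:n]}‖_∞ ≤ √2 · ‖x_{[m+1:M]}‖₂. -/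
/-!
Every coordinate of rank at least `M` is dominated in absolute value by each of the
`M - m ≥ M / 2` coordinates of rank in `[m, M)`, so `M · x_j² ≤ 2 (M - m) · x_j²` is at most
twice the sum of their squares.
-/

open Finset

section RankBand

variable {ι : Type*} {n : ℕ} (σ : ι ≃ Fin n)

theorem abs_le_abs_of_rank_le {x : ι → ℝ} (hσ : Antitone fun i => |x (σ.symm i)|) {j k : ι}
    (hjk : (σ j : ℕ) ≤ σ k) : |x k| ≤ |x j| := by
  simpa using hσ (Fin.le_iff_val_le_val.2 hjk)

variable [Fintype ι]

/-- Ranks are 0-indexed: the paper's `x_{[m+1:M]}` is supported on `rankBand σ m M`. -/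
def rankBand (m M : ℕ) : Finset ι :=
  univ.filter fun j => m ≤ (σ j : ℕ) ∧ (σ j : ℕ) < M

theorem rankBand_eq_map_attachFin {m M : ℕ} (hMn : M ≤ n) :
    rankBand σ m M =
      ((Ico m M).attachFin fun _ hk => (mem_Ico.1 hk).2.trans_le hMn).map
        σ.symm.toEmbedding := by
  ext j
  simp [rankBand]

theorem card_rankBand {m M : ℕ} (hMn : M ≤ n) : #(rankBand σ m M) = M - m := by
  rw [rankBand_eq_map_attachFin σ hMn, card_map, card_attachFin, Nat.card_Ico]

theorem mul_sq_le_two_mul_sum_rankBand {x : ι → ℝ} (hσ : Antitone fun i => |x (σ.symm i)|)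
    {m M : ℕ} (hm2 : 2 * m ≤ M) (hMn : M ≤ n) {j : ι} (hj : M ≤ (σ j : ℕ)) :
    M * x j ^ 2 ≤ 2 * ∑ k ∈ rankBand σ m M, x k ^ 2 := by
  have hdom : ∀ k ∈ rankBand σ m M, x j ^ 2 ≤ x k ^ 2 := fun k hk => by
    have hk : (σ k : ℕ) < M := (mem_filter.1 hk).2.2
    exact sq_le_sq.2 (abs_le_abs_of_rank_le σ hσ (by omega))
  have hcard : (M : ℝ) ≤ 2 * #(rankBand σ m M) := by
    rw [card_rankBand σ hMn]
    exact_mod_cast (by omega : M ≤ 2 * (M - m))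
  calc (M : ℝ) * x j ^ 2 ≤ 2 * #(rankBand σ m M) * x j ^ 2 := by gcongr
    _ = 2 * (#(rankBand σ m M) • x j ^ 2) := by rw [nsmul_eq_mul]; ring
    _ ≤ 2 * ∑ k ∈ rankBand σ m M, x k ^ 2 := by gcongr; exact card_nsmul_le_sum _ _ _ hdom

theorem sqrt_mul_abs_le_sqrt_two_mul_sqrt_sum_rankBand {x : ι → ℝ}
    (hσ : Antitone fun i => |x (σ.symm i)|) {m M : ℕ} (hm2 : 2 * m ≤ M) (hMn : M ≤ n) {j : ι}
    (hj : M ≤ (σ j : ℕ)) :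
    √M * |x j| ≤ √2 * √(∑ k ∈ rankBand σ m M, x k ^ 2) := by
  rw [← Real.sqrt_sq (abs_nonneg (x j)), ← Real.sqrt_mul (Nat.cast_nonneg M),
    ← Real.sqrt_mul zero_le_two, sq_abs]
  exact Real.sqrt_le_sqrt (mul_sq_le_two_mul_sum_rankBand σ hσ hm2 hMn hj)

end RankBand

theorem stmt7_general (n m M : ℕ) (hm2 : 2 * m ≤ M) (hMn : 2 * M ≤ n)
    (x : Fin n → ℝ)
    (σ : Equiv.Perm (Fin n))
    (hσ : ∀ i j : Fin n, i ≤ j → |x (σ.symm j)| ≤ |x (σ.symm i)|) :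
    Real.sqrt M * (⨆ j : {j : Fin n // M ≤ (σ j : ℕ)}, |x (j : Fin n)|) ≤
      Real.sqrt 2 * Real.sqrt (∑ j ∈ Finset.univ.filter
        (fun j : Fin n => m ≤ (σ j : ℕ) ∧ (σ j : ℕ) < M), (x j)^2) := by
  rw [Real.mul_iSup_of_nonneg (Real.sqrt_nonneg _)]
  refine Real.iSup_le (fun j => ?_) (by positivity)
  exact sqrt_mul_abs_le_sqrt_two_mul_sqrt_sum_rankBand σ (fun _ _ h => hσ _ _ h) hm2
    (by omega) j.2

/-- For a unit vector `x` and `m < M ≤ n/2` with `m ≤ M/2`: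
`√M ‖x_{[M+1:n]}‖_∞ ≤ √2 ‖x_{[m+1:M]}‖₂`, where `x_{[a:b]}` keeps the coordinates of `x`
whose absolute values rank from `a` to `b` in non-increasing order (`σ` gives the
0-indexed ranks). -/
theorem stmt7 (n m M : ℕ) (hmM : m < M) (hm2 : 2 * m ≤ M) (hMn : 2 * M ≤ n)
    (x : Fin n → ℝ) (hx : ∑ j, (x j)^2 = 1)
    (σ : Equiv.Perm (Fin n))
    (hσ : ∀ i j : Fin n, i ≤ j → |x (σ.symm j)| ≤ |x (σ.symm i)|) :
    Real.sqrt M * (⨆ j : {j : Fin n // M ≤ (σ j : ℕ)}, |x (j : Fin n)|) ≤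
      Real.sqrt 2 * Real.sqrt (∑ j ∈ Finset.univ.filter
        (fun j : Fin n => m ≤ (σ j : ℕ) ∧ (σ j : ℕ) < M), (x j)^2) :=
  stmt7_general n m M hm2 hMn x σ hσ
end

section
/- Let ξ be a symmetric random variable with P(|ξ| > t) ≥ C t^{−ρ} for all large t (for some C > 0, ρ > 0), let δ_{ij} be i.i.d. Bernoulli(p) with p ∼ n^{−α}, α ∈ (0,1), and a_{ij} = δ_{ij} ξ_{ij} with ξ_{ij} i.i.d. copies of ξ independent of the δ's. If ν > 0 satisfies ρ(ν + (1−α)/2) < 2 − α, then P(max_{i,j∈[n]} |a_{ij}| ≤ n^ν √(np)) ≤ exp(−C'' n^μ) for some μ > 0 and C'' > 0 and all large n. -/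
/-!
The pairs `(δ_ij, ξ_ij)` are independent, so the event factorizes over the `n²` entries, and
each entry exceeds the threshold `T = n^ν √(np)` with probability at least `p · C T^{-ρ}`
(take `δ_ij = 1` and `|ξ_ij| > T`). Hence the probability is at most
`(1 - p C T^{-ρ})^{n²} ≤ exp (-n² p C T^{-ρ})`, and `n² p T^{-ρ} ≍ n^{2 - α - ρ(ν + (1-α)/2)}`
is a positive power of `n` by the hypothesis on `ν`. No concentration of `∑ δ_ij` is needed.
-/

open MeasureTheory ProbabilityTheory

section Probability

variable {Ω : Type*} [MeasurableSpace Ω] {P : Measure Ω}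

theorem ProbabilityTheory.IndepFun.measureReal_abs_mul_le_le [IsProbabilityMeasure P]
    {X Y : Ω → ℝ} (hX : Measurable X) (hY : Measurable Y) (hXY : IndepFun X Y P) (T : ℝ) :
    P.real {ω | |X ω * Y ω| ≤ T} ≤ 1 - P.real {ω | X ω = 1} * P.real {ω | T < |Y ω|} := by
  have hsub : X ⁻¹' {1} ∩ Y ⁻¹' {y | T < |y|} ⊆ {ω | |X ω * Y ω| ≤ T}ᶜ := by
    rintro ω ⟨hXω, hYω⟩
    simp_all
  have hprod : P.real (X ⁻¹' {1} ∩ Y ⁻¹' {y | T < |y|}) =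
      P.real {ω | X ω = 1} * P.real {ω | T < |Y ω|} := by
    simp only [measureReal_def, hXY.measure_inter_preimage_eq_mul _ _ (measurableSet_singleton 1)
      (measurableSet_lt measurable_const measurable_abs), ENNReal.toReal_mul]
    rfl
  have hcompl := probReal_compl_eq_one_sub (μ := P) (s := {ω | |X ω * Y ω| ≤ T})
    (measurableSet_le (hX.mul hY).abs measurable_const)
  linarith [measureReal_mono (μ := P) hsub]

theorem ProbabilityTheory.iIndepFun.measureReal_forall_mem_le_exp {ι β : Type*} [Fintype ι]
    [MeasurableSpace β] {Z : ι → Ω → β} (hZ : iIndepFun Z P) {S : Set β} (hS : MeasurableSet S)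
    {q : ℝ} (hq : ∀ i, P.real (Z i ⁻¹' S) ≤ 1 - q) :
    P.real {ω | ∀ i, Z i ω ∈ S} ≤ Real.exp (-(Fintype.card ι * q)) := by
  have hset : {ω | ∀ i, Z i ω ∈ S} = ⋂ i ∈ (Finset.univ : Finset ι), Z i ⁻¹' S := by
    ext; simp
  calc P.real {ω | ∀ i, Z i ω ∈ S} = ∏ i, P.real (Z i ⁻¹' S) := by
        simp only [hset, measureReal_def, hZ.measure_inter_preimage_eq_mul Finset.univ
          (sets := fun _ => S) (fun _ _ => hS), ENNReal.toReal_prod]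
    _ ≤ ∏ _i : ι, Real.exp (-q) :=
        Finset.prod_le_prod (fun _ _ => measureReal_nonneg)
          (fun i _ => (hq i).trans (by linarith [Real.add_one_le_exp (-q)]))
    _ = Real.exp (-(Fintype.card ι * q)) := by
        rw [Finset.prod_const, ← Real.exp_nat_mul, Finset.card_univ]; ring_nf

theorem measureReal_forall_abs_mul_le_le_exp [IsProbabilityMeasure P] {ι : Type*} [Fintype ι]
    {δ ξ : ι → Ω → ℝ} (hδ : ∀ i, Measurable (δ i)) (hξ : ∀ i, Measurable (ξ i))
    (hind : iIndepFun (fun i ω => (δ i ω, ξ i ω)) P) (hindep : ∀ i, IndepFun (δ i) (ξ i) P)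
    {p q T : ℝ} (hp0 : 0 ≤ p) (hp : ∀ i, P.real {ω | δ i ω = 1} = p)
    (hq : ∀ i, q ≤ P.real {ω | T < |ξ i ω|}) :
    P.real {ω | ∀ i, |δ i ω * ξ i ω| ≤ T} ≤ Real.exp (-(Fintype.card ι * (p * q))) := by
  refine hind.measureReal_forall_mem_le_exp (S := {z | |z.1 * z.2| ≤ T})
    (measurableSet_le (measurable_fst.mul measurable_snd).abs measurable_const) fun i => ?_
  calc P.real {ω | |δ i ω * ξ i ω| ≤ T}
      ≤ 1 - P.real {ω | δ i ω = 1} * P.real {ω | T < |ξ i ω|} :=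
        (hindep i).measureReal_abs_mul_le_le (hδ i) (hξ i) T
    _ ≤ 1 - p * q := by rw [hp i]; gcongr; exact hq i

end Probability

section Asymptotics

open Real

theorem rpow_mul_sqrt_mul_rpow_neg {x : ℝ} (hx : 0 < x) {c : ℝ} (hc : 0 ≤ c) (α ν : ℝ) :
    x ^ ν * √(x * (c * x ^ (-α))) = √c * x ^ (ν + (1 - α) / 2) := by
  rw [show x * (c * x ^ (-α)) = c * x ^ (1 - α) by
      rw [sub_eq_add_neg, rpow_add hx, rpow_one]; ring,
    sqrt_mul hc, sqrt_eq_rpow (x ^ (1 - α)), ← rpow_mul hx.le, rpow_add hx]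
  ring_nf

theorem rpow_mul_sqrt_mul_mem_Icc {x : ℝ} (hx : 0 < x) {c₁ c₂ p : ℝ} (hc₁ : 0 ≤ c₁)
    (hc₂ : 0 ≤ c₂) {α : ℝ} (hp₁ : c₁ * x ^ (-α) ≤ p) (hp₂ : p ≤ c₂ * x ^ (-α)) (ν : ℝ) :
    x ^ ν * √(x * p) ∈
      Set.Icc (√c₁ * x ^ (ν + (1 - α) / 2)) (√c₂ * x ^ (ν + (1 - α) / 2)) := by
  rw [← rpow_mul_sqrt_mul_rpow_neg hx hc₁, ← rpow_mul_sqrt_mul_rpow_neg hx hc₂]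
  constructor <;> gcongr

theorem rpow_le_sq_mul_mul_tail {x p T C c₁ c₂ α ρ e : ℝ} (hx : 0 < x) (hC : 0 ≤ C)
    (hc₂ : 0 ≤ c₂) (hρ : 0 ≤ ρ) (hp0 : 0 ≤ p) (hp : c₁ * x ^ (-α) ≤ p) (hT : 0 < T)
    (hT₂ : T ≤ √c₂ * x ^ e) :
    C * c₁ * c₂ ^ (-(ρ / 2)) * x ^ (2 - α - ρ * e) ≤ x ^ 2 * (p * (C * T ^ (-ρ))) := by
  have hpow : x ^ (2 - α - ρ * e) = x ^ 2 * x ^ (-α) * x ^ (-(ρ * e)) := by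
    rw [sub_eq_add_neg, sub_eq_add_neg, rpow_add hx, rpow_add hx, rpow_two]
  have htail : c₂ ^ (-(ρ / 2)) * x ^ (-(ρ * e)) ≤ T ^ (-ρ) := by
    calc c₂ ^ (-(ρ / 2)) * x ^ (-(ρ * e)) = (√c₂ * x ^ e) ^ (-ρ) := by
          rw [mul_rpow (sqrt_nonneg _) (by positivity), sqrt_eq_rpow, ← rpow_mul hc₂,
            ← rpow_mul hx.le]
          ring_nf
      _ ≤ T ^ (-ρ) := rpow_le_rpow_of_nonpos hT hT₂ (by linarith)
  calc C * c₁ * c₂ ^ (-(ρ / 2)) * x ^ (2 - α - ρ * e)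
      = x ^ 2 * (c₁ * x ^ (-α) * (C * (c₂ ^ (-(ρ / 2)) * x ^ (-(ρ * e))))) := by
        rw [hpow]; ring
    _ ≤ x ^ 2 * (p * (C * T ^ (-ρ))) := by gcongr

end Asymptotics

open Real Filter in
theorem stmt9_general (C ρ α ν : ℝ) (hC : 0 < C) (hρ : 0 < ρ) (hα : α ∈ Set.Ioo (0:ℝ) 1)
    (hν : 0 < ν) (hcond : ρ * (ν + (1 - α)/2) < 2 - α)
    (c₁ c₂ t₀ : ℝ) (hc₁ : 0 < c₁) (hc₂ : 0 < c₂) :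
    ∃ μ C'' : ℝ, 0 < μ ∧ 0 < C'' ∧ ∃ N : ℕ, ∀ n : ℕ, N ≤ n →
    ∀ (p : ℝ), c₁ * (n:ℝ)^(-α) ≤ p → p ≤ c₂ * (n:ℝ)^(-α) → p ≤ 1 →
    ∀ (Ω : Type) [MeasureSpace Ω] [IsProbabilityMeasure (ℙ : Measure Ω)]
      (δ ξ : Fin n → Fin n → Ω → ℝ),
      (∀ i j, Measurable (δ i j)) → (∀ i j, Measurable (ξ i j)) →
      (∀ i j, (ℙ {ω | δ i j ω = 1}).toReal = p ∧ ℙ {ω | δ i j ω = 1 ∨ δ i j ω = 0} = 1) →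
      (∀ i j, ∀ t : ℝ, t₀ ≤ t → C * t^(-ρ) ≤ (ℙ {ω | t < |ξ i j ω|}).toReal) →
      ProbabilityTheory.iIndepFun
        (fun (ij : Fin n × Fin n) ω => (δ ij.1 ij.2 ω, ξ ij.1 ij.2 ω)) ℙ →
      (∀ i j, ProbabilityTheory.IndepFun (δ i j) (ξ i j) ℙ) →
      (ℙ {ω | ∀ i j, |δ i j ω * ξ i j ω| ≤ (n:ℝ)^ν * Real.sqrt (n * p)}).toReal ≤
        Real.exp (-C'' * (n:ℝ)^μ) := by
  have he : 0 < ν + (1 - α) / 2 := by linarith [hα.2]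
  set e := ν + (1 - α) / 2
  obtain ⟨N, hN⟩ := eventually_atTop.1 <| (((tendsto_rpow_atTop he).comp
    tendsto_natCast_atTop_atTop).const_mul_atTop (sqrt_pos.2 hc₁)).eventually_ge_atTop t₀
  refine ⟨2 - α - ρ * e, C * c₁ * c₂ ^ (-(ρ / 2)), by linarith, by positivity, max N 1, ?_⟩
  intro n hn p hp₁ hp₂ _ Ω _ _ δ ξ hδ hξ hber htail hind hindep
  have hn0 : (0 : ℝ) < n := by exact_mod_cast (le_of_max_le_right hn)
  have hp0 : 0 < p := (by positivity : 0 < c₁ * (n : ℝ) ^ (-α)).trans_le hp₁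
  set T := (n : ℝ) ^ ν * √(n * p)
  obtain ⟨hT₁, hT₂⟩ := rpow_mul_sqrt_mul_mem_Icc hn0 hc₁.le hc₂.le hp₁ hp₂ ν
  have hprob := measureReal_forall_abs_mul_le_le_exp (ι := Fin n × Fin n)
    (fun ij => hδ ij.1 ij.2) (fun ij => hξ ij.1 ij.2) hind (fun ij => hindep ij.1 ij.2) hp0.le
    (fun ij => (hber ij.1 ij.2).1) (q := C * T ^ (-ρ))
    (fun ij => htail ij.1 ij.2 T ((hN n (le_of_max_le_left hn)).trans hT₁))
  calc volume.real {ω | ∀ i j, |δ i j ω * ξ i j ω| ≤ T}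
      = volume.real {ω | ∀ ij : Fin n × Fin n, |δ ij.1 ij.2 ω * ξ ij.1 ij.2 ω| ≤ T} := by
        simp only [Prod.forall]
    _ ≤ exp (-(Fintype.card (Fin n × Fin n) * (p * (C * T ^ (-ρ))))) := hprob
    _ ≤ exp (-(C * c₁ * c₂ ^ (-(ρ / 2))) * (n : ℝ) ^ (2 - α - ρ * e)) := by
        rw [neg_mul, exp_le_exp, neg_le_neg_iff, Fintype.card_prod, Fintype.card_fin,
          Nat.cast_mul, ← sq]
        exact rpow_le_sq_mul_mul_tail hn0 hC.le hc₂.le hρ.le hp0.le hp₁ (by positivity) hT₂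

/-- Lower bound failure probability for the spectral norm of sparse heavy-tailed matrices:
for a symmetric `ξ` with tail `P(|ξ| > t) ≥ C t^{−ρ}` (t large), `δ_{ij}` Bernoulli(p)
with `p ∼ n^{−α}`, and `ν > 0` with `ρ(ν + (1−α)/2) < 2 − α`, one has
`P(max_{ij} |δ_{ij} ξ_{ij}| ≤ n^ν √(np)) ≤ exp(−C'' n^μ)` for some `μ, C'' > 0` and all
large `n`. -/
theorem stmt9 (C ρ α ν : ℝ) (hC : 0 < C) (hρ : 0 < ρ) (hα : α ∈ Set.Ioo (0:ℝ) 1)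
    (hν : 0 < ν) (hcond : ρ * (ν + (1 - α)/2) < 2 - α)
    (c₁ c₂ t₀ : ℝ) (hc₁ : 0 < c₁) (hc₂ : 0 < c₂) (ht₀ : 0 < t₀) :
    ∃ μ C'' : ℝ, 0 < μ ∧ 0 < C'' ∧ ∃ N : ℕ, ∀ n : ℕ, N ≤ n →
    ∀ (p : ℝ), c₁ * (n:ℝ)^(-α) ≤ p → p ≤ c₂ * (n:ℝ)^(-α) → p ≤ 1 →
    ∀ (Ω : Type) [MeasureSpace Ω] [IsProbabilityMeasure (ℙ : Measure Ω)]
      (δ ξ : Fin n → Fin n → Ω → ℝ),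
      (∀ i j, Measurable (δ i j)) → (∀ i j, Measurable (ξ i j)) →
      (∀ i j, (ℙ {ω | δ i j ω = 1}).toReal = p ∧ ℙ {ω | δ i j ω = 1 ∨ δ i j ω = 0} = 1) →
      (∀ i j, ∀ t : ℝ, t₀ ≤ t → C * t^(-ρ) ≤ (ℙ {ω | t < |ξ i j ω|}).toReal) →
      ProbabilityTheory.iIndepFun
        (fun (ij : Fin n × Fin n) ω => (δ ij.1 ij.2 ω, ξ ij.1 ij.2 ω)) ℙ →
      (∀ i j, ProbabilityTheory.IndepFun (δ i j) (ξ i j) ℙ) →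
      (ℙ {ω | ∀ i j, |δ i j ω * ξ i j ω| ≤ (n:ℝ)^ν * Real.sqrt (n * p)}).toReal ≤
        Real.exp (-C'' * (n:ℝ)^μ) :=
  stmt9_general C ρ α ν hC hρ hα hν hcond c₁ c₂ t₀ hc₁ hc₂
end
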